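/- Let C ⊆ Mat_{n×m}(F_q) be an F_q-linear rank-metric code and let C^⊥ be its dual under the trace bilinear form. Then d_min(C) ≤ maxrk(C^⊥) + 1. -/

import Mathlib

/-!
Let `t = maxrk C^⊥`; we may assume `k = t + 1 ≤ min m n`. Let `L` be the code of matrices
supported on the first `k` rows: its elements have rank `≤ k`, and `L^⊥` consists of the
matrices vanishing on those rows. If `C ∩ L = 0`, then `C^⊥ + L^⊥ = (C ∩ L)^⊥` is the whole
space, since the trace form is nondegenerate. So the matrix with a `k × k` identity block in
its top-left corner is `E + w` with `E ∈ C^⊥` and `w ∈ L^⊥`. Then `E` still has that identity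
block, so its rank is at least `k > t`, a contradiction. Hence `C ∩ L` contains a nonzero
matrix, and its rank is `≤ k`.
-/

open Matrix

open scoped Classical in
/-- Minimum distance of a matrix rank-metric code. -/
noncomputable def dminMat {Fq : Type*} [Field Fq] {n m : ℕ}
    (C : Submodule Fq (Matrix (Fin n) (Fin m) Fq)) : ℕ :=
  if C = ⊥ then min m n + 1
  else sInf {r : ℕ | ∃ M ∈ C, M ≠ 0 ∧ M.rank = r}

/-- Maximum rank of a matrix rank-metric code. -/
noncomputable def maxrkMat {Fq : Type*} [Field Fq] {n m : ℕ}
    (C : Submodule Fq (Matrix (Fin n) (Fin m) Fq)) : ℕ :=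
  sSup {r : ℕ | ∃ M ∈ C, M.rank = r}

/-- The dual of a matrix rank-metric code under the trace bilinear form
`(M, N) ↦ tr (M * Nᵀ)`. -/
def dualMat {Fq : Type*} [Field Fq] {n m : ℕ}
    (C : Submodule Fq (Matrix (Fin n) (Fin m) Fq)) :
    Submodule Fq (Matrix (Fin n) (Fin m) Fq) where
  carrier := {M | ∀ N ∈ C, Matrix.trace (M * Nᵀ) = 0}
  add_mem' := fun {a b} ha hb N hN => by
    simp [Matrix.add_mul, ha N hN, hb N hN]
  zero_mem' := fun N hN => by simp
  smul_mem' := fun c a ha N hN => by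
    simp [Matrix.smul_mul, ha N hN]

namespace Matrix

variable {R ι κ μ : Type*} [Field R] [Fintype ι] [Fintype κ] [Fintype μ]

def traceForm : LinearMap.BilinForm R (Matrix ι κ R) :=
  LinearMap.mk₂ R (fun M N => trace (M * Nᵀ))
    (fun _ _ _ => by simp [Matrix.add_mul])
    (fun _ _ _ => by simp [Matrix.smul_mul])
    (fun _ _ _ => by simp [Matrix.mul_add])
    (fun _ _ _ => by simp [Matrix.mul_smul])

@[simp]
lemma traceForm_apply (M N : Matrix ι κ R) : traceForm M N = trace (M * Nᵀ) := rfl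

variable [DecidableEq κ]

lemma traceForm_separatingLeft [DecidableEq ι] :
    (traceForm : LinearMap.BilinForm R (Matrix ι κ R)).SeparatingLeft := by
  intro M hM
  ext i j
  simpa [transpose_single, trace_mul_single] using hM (single i j 1)

lemma traceForm_nondegenerate [DecidableEq ι] :
    (traceForm : LinearMap.BilinForm R (Matrix ι κ R)).Nondegenerate :=
  .ofSeparatingLeft traceForm_separatingLeft

omit [Fintype κ] in
lemma transpose_mul_self_one_submatrix [DecidableEq ι] {f : κ → ι}
    (hf : Function.Injective f) :
    ((1 : Matrix ι ι R).submatrix id f)ᵀ * (1 : Matrix ι ι R).submatrix id f = 1 := by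
  rw [transpose_submatrix, transpose_one, ← Equiv.coe_refl, mul_submatrix_one]
  simpa using submatrix_one f hf

lemma card_le_rank_of_transpose_mul_eq {P : Matrix ι κ R} {S : Matrix μ κ R}
    {E : Matrix ι μ R} (hS : Sᵀ * S = 1) (hE : Pᵀ * E = Sᵀ) : Fintype.card κ ≤ E.rank :=
  calc Fintype.card κ = (Pᵀ * E * S).rank := by rw [hE, hS, rank_one]
    _ ≤ (Pᵀ * E).rank := rank_mul_le_left _ _
    _ ≤ E.rank := rank_mul_le_right _ _

end Matrix

section RankMetricCode

variable {R : Type*} [Field R] {n m : ℕ} {C : Submodule R (Matrix (Fin n) (Fin m) R)}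
  {M : Matrix (Fin n) (Fin m) R}

lemma dualMat_eq_comap_toDual (C : Submodule R (Matrix (Fin n) (Fin m) R)) :
    dualMat C =
      C.dualAnnihilator.comap (traceForm.toDual traceForm_nondegenerate).toLinearMap := by
  ext M
  simp [dualMat, Submodule.mem_dualAnnihilator, LinearMap.BilinForm.toDual_def]

lemma dualMat_inf (C D : Submodule R (Matrix (Fin n) (Fin m) R)) :
    dualMat (C ⊓ D) = dualMat C ⊔ dualMat D := by
  simp only [dualMat_eq_comap_toDual, Subspace.dualAnnihilator_inf_eq,
    Submodule.comap_equiv_eq_map_symm, Submodule.map_sup]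

lemma dualMat_bot : dualMat (⊥ : Submodule R (Matrix (Fin n) (Fin m) R)) = ⊤ := by
  ext M
  simp [dualMat]

lemma transpose_mul_eq_zero_of_mem_dualMat_range {κ : Type*} [Fintype κ] [DecidableEq κ]
    {P : Matrix (Fin n) κ R} {w : Matrix (Fin n) (Fin m) R}
    (hw : w ∈ dualMat (LinearMap.range (mulLeftLinearMap (Fin m) R P))) : Pᵀ * w = 0 :=
  traceForm_separatingLeft _ fun Q => by
    rw [traceForm_apply, Matrix.mul_assoc, ← trace_mul_cycle', ← transpose_mul]
    exact hw _ ⟨Q, rfl⟩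

lemma rank_le_maxrkMat (hM : M ∈ C) : M.rank ≤ maxrkMat C :=
  le_csSup ⟨n, by rintro _ ⟨N, -, rfl⟩; simpa using N.rank_le_card_height⟩ ⟨M, hM, rfl⟩

lemma dminMat_le_rank (hM : M ∈ C) (hM0 : M ≠ 0) : dminMat C ≤ M.rank := by
  rw [dminMat, if_neg fun h => hM0 (by simpa [h] using hM)]
  exact Nat.sInf_le ⟨M, hM, hM0, rfl⟩

lemma dminMat_le_min_add_one (C : Submodule R (Matrix (Fin n) (Fin m) R)) :
    dminMat C ≤ min m n + 1 := by
  by_cases hC : C = ⊥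
  · simp [dminMat, hC]
  obtain ⟨M, hM, hM0⟩ := Submodule.exists_mem_ne_zero_of_ne_bot hC
  calc dminMat C ≤ M.rank := dminMat_le_rank hM hM0
    _ ≤ min m n :=
      le_min (by simpa using M.rank_le_card_width) (by simpa using M.rank_le_card_height)
    _ ≤ min m n + 1 := Nat.le_succ _

lemma exists_mem_ne_zero_rank_le_of_forall_mem_dualMat_rank_lt {k : ℕ}
    (hkn : k ≤ n) (hkm : k ≤ m) (hC : ∀ E ∈ dualMat C, E.rank < k) :
    ∃ M ∈ C, M ≠ 0 ∧ M.rank ≤ k := by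
  set P : Matrix (Fin n) (Fin k) R := (1 : Matrix _ _ R).submatrix id (Fin.castLE hkn)
  set S : Matrix (Fin m) (Fin k) R := (1 : Matrix _ _ R).submatrix id (Fin.castLE hkm)
  set L := LinearMap.range (mulLeftLinearMap (Fin m) R P)
  by_contra! h
  have hCL : C ⊓ L = ⊥ := by
    refine (Submodule.eq_bot_iff _).2 fun M hM => by_contra fun hM0 => ?_
    obtain ⟨Q, hQ⟩ := hM.2
    rw [mulLeftLinearMap_apply] at hQ
    have hrank : (P * Q).rank ≤ k :=
      (rank_mul_le_right P Q).trans (by simpa using Q.rank_le_card_height)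
    exact (h M hM.1 hM0).not_ge (hQ ▸ hrank)
  have hJ : P * Sᵀ ∈ dualMat C ⊔ dualMat L := by
    rw [← dualMat_inf, hCL, dualMat_bot]
    trivial
  obtain ⟨E, hE, w, hw, hEw⟩ := Submodule.mem_sup.1 hJ
  have hPE : Pᵀ * E = Sᵀ := by
    rw [← add_sub_cancel_right E w, hEw, Matrix.mul_sub,
      transpose_mul_eq_zero_of_mem_dualMat_range hw, sub_zero, ← Matrix.mul_assoc,
      transpose_mul_self_one_submatrix (Fin.castLE_injective hkn), Matrix.one_mul]
  have hkE : k ≤ E.rank := by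
    simpa using card_le_rank_of_transpose_mul_eq
      (transpose_mul_self_one_submatrix (Fin.castLE_injective hkm)) hPE
  exact (hC E hE).not_ge hkE

end RankMetricCode

theorem stmt16 {Fq : Type*} [Field Fq] {n m : ℕ}
    (C : Submodule Fq (Matrix (Fin n) (Fin m) Fq)) :
    dminMat C ≤ maxrkMat (dualMat C) + 1 := by
  rcases le_or_gt (min m n) (maxrkMat (dualMat C)) with hle | hlt
  · exact (dminMat_le_min_add_one C).trans (by omega)
  · obtain ⟨M, hMC, hM0, hMk⟩ := exists_mem_ne_zero_rank_le_of_forall_mem_dualMat_rank_lt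
      (k := maxrkMat (dualMat C) + 1) (by omega) (by omega)
      fun E hE => Nat.lt_succ_of_le (rank_le_maxrkMat hE)
    exact (dminMat_le_rank hMC hM0).trans hMk
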